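/- There exist absolute constants c₁, c₂ ≥ 1 such that the following holds. Let d, n ≥ 1 be integers and 0 < δ ≤ ε ≤ 1/3. Let x = (x₁,…,xₙ) and x' = (x₁',…,xₙ') be tuples in (ℝ^d)ⁿ with xᵢ = xᵢ' for all but at most one index i. For a tuple y = (y₁,…,yₙ), define f_y(p) = #{i : ‖p − yᵢ‖₂ ≤ √d} for p ∈ ℝ^d, the measure ν_y(S) = ∫_S 1[f_y(p) ≥ 1]·e^{ε·min(f_y(p), 2n/3)} dp for Borel S ⊆ ℝ^d, and the total mass Z_y = ν_y(ℝ^d) + (4/δ)·V_B, where V_B is the Lebesgue volume of a ball of radius √d in ℝ^d. Then for every Borel set S ⊆ ℝ^d and every t ∈ {0, 1}: (ν_x(S) + t·(4/δ)·V_B)/Z_x ≤ e^{c₁·ε}·(ν_{x'}(S) + t·(4/δ)·V_B)/Z_{x'} + c₂·δ. -/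

import Mathlib

/-!
The density of `ν_y` at `p` depends only on the number `f_y(p)` of balls covering `p`, and
changing one data point moves `f_y(p)` by at most one, and only inside the ball around the
changed point. Hence the density of `ν_x` is at most `e^ε` times that of `ν_{x'}`, plus `e^ε`
on that ball, so `ν_x(S) ≤ e^ε ν_{x'}(S) + e^ε V_B`. As `e^ε ≤ 2`, the error `e^ε V_B` is at
most `δ/2` times the garbage mass `(4/δ) V_B`, which is absorbed by the normalization at the
cost of a further factor `e^ε + δ/2 ≤ e^{2ε}` and an additive `δ/2`.
-/

open MeasureTheory Metric
open scoped ENNReal Classical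

/-- The (unnormalized) exponential-mechanism measure over `ℝ^d` determined by the data
`y₁, …, yₙ`: on a Borel set `S` it integrates `e^{ε·min(f_y(p), 2n/3)}` over the points
`p ∈ S` covered by at least one ball of radius `√d` around some `yᵢ`, where `f_y(p)` is
the number of such balls containing `p`. -/
noncomputable def nuMeas (d n : ℕ) (ε : ℝ) (y : Fin n → EuclideanSpace ℝ (Fin d))
    (S : Set (EuclideanSpace ℝ (Fin d))) : ℝ≥0∞ :=
  ∫⁻ p in S,
    if 1 ≤ (Finset.univ.filter (fun i => dist p (y i) ≤ Real.sqrt d)).card then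
      ENNReal.ofReal (Real.exp (ε * min
        (((Finset.univ.filter (fun i => dist p (y i) ≤ Real.sqrt d)).card : ℝ))
        (2 * (n : ℝ) / 3)))
    else 0

lemma ENNReal.div_le_mul_div_add {a a' z z' g e η : ℝ≥0∞} (ha : a ≤ e * a' + η * g)
    (hz : z' ≤ (e + η) * z) (hg : g ≤ z) (hK₀ : e + η ≠ 0) (hK : e + η ≠ ∞) :
    a / z ≤ e * (e + η) * (a' / z') + η := by
  have hinv : z⁻¹ ≤ (e + η) * z'⁻¹ :=
    calc z⁻¹ = (e + η) * ((e + η) * z)⁻¹ := by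
          rw [ENNReal.mul_inv (.inl hK₀) (.inl hK), ← mul_assoc,
            ENNReal.mul_inv_cancel hK₀ hK, one_mul]
      _ ≤ (e + η) * z'⁻¹ := by gcongr
  calc a / z ≤ (e * a' + η * g) / z := by gcongr
    _ = e * (a' * z⁻¹) + η * (g / z) := by
        rw [ENNReal.add_div, mul_div_assoc, mul_div_assoc, div_eq_mul_inv]
    _ ≤ e * (a' * ((e + η) * z'⁻¹)) + η * 1 := by
        gcongr
        exact ENNReal.div_le_of_le_mul (by rwa [one_mul])
    _ = e * (e + η) * (a' / z') + η := by rw [div_eq_mul_inv]; ring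

lemma ENNReal.add_mul_div_add_le {a a' b b' g t e η : ℝ≥0∞} (ha : a ≤ e * a' + η * g)
    (hb : b' ≤ e * b + η * g) (he : 1 ≤ e) (he' : e ≠ ∞) (hη : η ≠ ∞) :
    (a + t * g) / (b + g) ≤ e * (e + η) * ((a' + t * g) / (b' + g)) + η := by
  refine ENNReal.div_le_mul_div_add ?_ ?_ le_add_self
    (zero_lt_one.trans_le (he.trans le_self_add)).ne' (ENNReal.add_ne_top.2 ⟨he', hη⟩)
  · calc a + t * g ≤ e * a' + η * g + e * (t * g) := add_le_add ha (le_mul_of_one_le_left' he)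
      _ = e * (a' + t * g) + η * g := by ring
  · calc b' + g ≤ e * b + η * g + (e * g + η * b) :=
          add_le_add hb ((le_mul_of_one_le_left' he).trans le_self_add)
      _ = (e + η) * (b + g) := by ring

lemma Real.exp_add_le_exp_two_mul {ε η : ℝ} (hε : 0 ≤ ε) (hη : η ≤ ε) :
    Real.exp ε + η ≤ Real.exp (2 * ε) := by
  have h1 : 1 ≤ Real.exp ε := Real.one_le_exp hε
  have h2 : ε + 1 ≤ Real.exp ε := Real.add_one_le_exp ε
  rw [two_mul, Real.exp_add]
  nlinarith

section Density

variable {X : Type*} [PseudoMetricSpace X] {n : ℕ}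

noncomputable def coverCount (r : ℝ) (y : Fin n → X) (p : X) : ℕ :=
  (Finset.univ.filter (fun i => dist p (y i) ≤ r)).card

/-- The density of `ν_y` at a point covered by `k` balls; `nuMeas` has the cap `m = 2n/3`. -/
noncomputable def capExp (ε m : ℝ) (k : ℕ) : ℝ≥0∞ :=
  if 1 ≤ k then ENNReal.ofReal (Real.exp (ε * min (k : ℝ) m)) else 0

lemma nuMeas_eq_setLIntegral_capExp (d n : ℕ) (ε : ℝ) (y : Fin n → EuclideanSpace ℝ (Fin d))
    (S : Set (EuclideanSpace ℝ (Fin d))) :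
    nuMeas d n ε y S = ∫⁻ p in S, capExp ε (2 * n / 3) (coverCount (Real.sqrt d) y p) :=
  rfl

variable {ε : ℝ} (m : ℝ)

lemma capExp_mono (hε : 0 ≤ ε) : Monotone (capExp ε m) := by
  intro k l hkl
  unfold capExp
  split_ifs
  · gcongr
  · omega
  · exact zero_le
  · exact le_rfl

lemma capExp_succ_le (hε : 0 ≤ ε) (k : ℕ) :
    capExp ε m (k + 1) ≤
      ENNReal.ofReal (Real.exp ε) * capExp ε m k + ENNReal.ofReal (Real.exp ε) := by
  rcases Nat.eq_zero_or_pos k with rfl | hk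
  · refine le_add_left ?_
    rw [capExp, if_pos le_rfl]
    gcongr
    simpa using mul_le_mul_of_nonneg_left (min_le_left (1 : ℝ) m) hε
  · refine le_add_right ?_
    rw [capExp, capExp, if_pos (by omega), if_pos (show 1 ≤ k from hk),
      ← ENNReal.ofReal_mul (Real.exp_pos _).le, ← Real.exp_add]
    gcongr
    have : min ((k + 1 : ℕ) : ℝ) m ≤ min (k : ℝ) m + 1 := by
      rw [← min_add_add_right]
      push_cast
      exact min_le_min_left _ (by linarith)
    nlinarith

variable {r : ℝ} {x x' : Fin n → X} {i₀ : Fin n}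

lemma coverCount_le_succ (hx : ∀ i, i ≠ i₀ → x i = x' i) (p : X) :
    coverCount r x p ≤ coverCount r x' p + 1 := by
  refine (Finset.card_le_card fun i hi => ?_).trans (Finset.card_insert_le i₀ _)
  rcases eq_or_ne i i₀ with rfl | hne
  · exact Finset.mem_insert_self _ _
  · simp only [Finset.mem_filter, Finset.mem_univ, true_and] at hi
    exact Finset.mem_insert_of_mem (by simpa [← hx i hne])

lemma coverCount_le_of_notMem (hx : ∀ i, i ≠ i₀ → x i = x' i) {p : X}
    (hp : p ∉ closedBall (x i₀) r) : coverCount r x p ≤ coverCount r x' p := by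
  refine Finset.card_le_card fun i hi => ?_
  simp only [Finset.mem_filter, Finset.mem_univ, true_and] at hi
  have hne : i ≠ i₀ := by rintro rfl; exact hp hi
  simpa [← hx i hne]

lemma capExp_coverCount_le (hε : 0 ≤ ε) (hx : ∀ i, i ≠ i₀ → x i = x' i) (p : X) :
    capExp ε m (coverCount r x p) ≤
      ENNReal.ofReal (Real.exp ε) * capExp ε m (coverCount r x' p) +
        (closedBall (x i₀) r).indicator (fun _ => ENNReal.ofReal (Real.exp ε)) p := by
  by_cases hp : p ∈ closedBall (x i₀) r
  · rw [Set.indicator_of_mem hp]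
    exact (capExp_mono m hε (coverCount_le_succ hx p)).trans (capExp_succ_le m hε _)
  · rw [Set.indicator_of_notMem hp, add_zero]
    refine (capExp_mono m hε (coverCount_le_of_notMem hx hp)).trans
      (le_mul_of_one_le_left' ?_)
    rw [← ENNReal.ofReal_one]
    exact ENNReal.ofReal_le_ofReal (Real.one_le_exp hε)

lemma setLIntegral_capExp_coverCount_le [MeasurableSpace X] [OpensMeasurableSpace X]
    (μ : Measure X) (hε : 0 ≤ ε) (hx : ∀ i, i ≠ i₀ → x i = x' i) (S : Set X) :
    ∫⁻ p in S, capExp ε m (coverCount r x p) ∂μ ≤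
      ENNReal.ofReal (Real.exp ε) * ∫⁻ p in S, capExp ε m (coverCount r x' p) ∂μ +
        ENNReal.ofReal (Real.exp ε) * μ (closedBall (x i₀) r) :=
  calc ∫⁻ p in S, capExp ε m (coverCount r x p) ∂μ
      ≤ ∫⁻ p in S, ENNReal.ofReal (Real.exp ε) * capExp ε m (coverCount r x' p) +
          (closedBall (x i₀) r).indicator (fun _ => ENNReal.ofReal (Real.exp ε)) p ∂μ :=
        lintegral_mono (capExp_coverCount_le m hε hx)
    _ = ENNReal.ofReal (Real.exp ε) * ∫⁻ p in S, capExp ε m (coverCount r x' p) ∂μ +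
          ENNReal.ofReal (Real.exp ε) * μ.restrict S (closedBall (x i₀) r) := by
        rw [lintegral_add_right _ (measurable_const.indicator measurableSet_closedBall),
          lintegral_const_mul' _ _ ENNReal.ofReal_ne_top,
          lintegral_indicator_const measurableSet_closedBall]
    _ ≤ _ := by gcongr; exact Measure.restrict_le_self

end Density

lemma nuMeas_le_exp_mul_add {d n : ℕ} {ε : ℝ} (hε : 0 ≤ ε)
    {y y' : Fin n → EuclideanSpace ℝ (Fin d)} {i₀ : Fin n} (hy : ∀ i, i ≠ i₀ → y i = y' i)
    (S : Set (EuclideanSpace ℝ (Fin d))) :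
    nuMeas d n ε y S ≤ ENNReal.ofReal (Real.exp ε) * nuMeas d n ε y' S +
      ENNReal.ofReal (Real.exp ε) *
        volume (closedBall (0 : EuclideanSpace ℝ (Fin d)) (Real.sqrt d)) := by
  simpa only [nuMeas_eq_setLIntegral_capExp, Measure.addHaar_closedBall_center]
    using setLIntegral_capExp_coverCount_le _ volume hε hy S

/-- Privacy of the exponential-mechanism-style distribution with a garbage atom of mass
`(4/δ)·V_B`: changing one data point changes the normalized probability of any Borel set
(with or without the garbage atom) by at most an `e^{c₁ε}` factor plus `c₂δ`. -/
theorem stmt_13 :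
    ∃ c₁ c₂ : ℝ, 1 ≤ c₁ ∧ 1 ≤ c₂ ∧
      ∀ (d n : ℕ), 1 ≤ d → 1 ≤ n →
      ∀ ε δ : ℝ, 0 < δ → δ ≤ ε → ε ≤ 1/3 →
      ∀ x x' : Fin n → EuclideanSpace ℝ (Fin d),
        (∃ i₀, ∀ i, i ≠ i₀ → x i = x' i) →
      ∀ S : Set (EuclideanSpace ℝ (Fin d)), MeasurableSet S →
      ∀ t : ℝ≥0∞, t = 0 ∨ t = 1 →
        (nuMeas d n ε x S + t * (ENNReal.ofReal (4 / δ) *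
              volume (closedBall (0 : EuclideanSpace ℝ (Fin d)) (Real.sqrt d)))) /
            (nuMeas d n ε x Set.univ + ENNReal.ofReal (4 / δ) *
              volume (closedBall (0 : EuclideanSpace ℝ (Fin d)) (Real.sqrt d))) ≤
          ENNReal.ofReal (Real.exp (c₁ * ε)) *
            ((nuMeas d n ε x' S + t * (ENNReal.ofReal (4 / δ) *
                volume (closedBall (0 : EuclideanSpace ℝ (Fin d)) (Real.sqrt d)))) /
              (nuMeas d n ε x' Set.univ + ENNReal.ofReal (4 / δ) *
                volume (closedBall (0 : EuclideanSpace ℝ (Fin d)) (Real.sqrt d)))) +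
          ENNReal.ofReal (c₂ * δ) := by
  refine ⟨3, 1, le_of_lt (by norm_num), le_rfl, ?_⟩
  intro d n _ _ ε δ hδ hδε hε x x' ⟨i₀, hx⟩ S _ t _
  have hε₀ : 0 ≤ ε := hδ.le.trans hδε
  set V := volume (closedBall (0 : EuclideanSpace ℝ (Fin d)) (Real.sqrt d))
  set G := ENNReal.ofReal (4 / δ) * V
  set E := ENNReal.ofReal (Real.exp ε)
  set η := ENNReal.ofReal (δ / 2)
  have hE : 1 ≤ E := by
    rw [← ENNReal.ofReal_one]
    exact ENNReal.ofReal_le_ofReal (Real.one_le_exp hε₀)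
  have hEV : E * V ≤ η * G := by
    have hexp : Real.exp ε ≤ 2 :=
      (Real.exp_le_exp.2 (hε.trans (by linarith [Real.log_two_gt_d9]))).trans_eq
        (Real.exp_log two_pos)
    rw [← mul_assoc, ← ENNReal.ofReal_mul (by positivity),
      show δ / 2 * (4 / δ) = 2 by field_simp; norm_num]
    gcongr
    exact ENNReal.ofReal_le_ofReal hexp
  have hnu : ∀ y y' : Fin n → EuclideanSpace ℝ (Fin d), (∀ i, i ≠ i₀ → y i = y' i) →
      ∀ T, nuMeas d n ε y T ≤ E * nuMeas d n ε y' T + η * G := fun y y' hy T =>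
    (nuMeas_le_exp_mul_add hε₀ hy T).trans (by gcongr)
  have hK : E + η ≤ ENNReal.ofReal (Real.exp (2 * ε)) := by
    rw [← ENNReal.ofReal_add (Real.exp_pos _).le (by positivity)]
    exact ENNReal.ofReal_le_ofReal (Real.exp_add_le_exp_two_mul hε₀ (by linarith))
  calc _ ≤ E * (E + η) * ((nuMeas d n ε x' S + t * G) / (nuMeas d n ε x' Set.univ + G)) + η :=
        ENNReal.add_mul_div_add_le (hnu x x' hx S) (hnu x' x (fun i hi => (hx i hi).symm) _)
          hE ENNReal.ofReal_ne_top ENNReal.ofReal_ne_top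
    _ ≤ ENNReal.ofReal (Real.exp ε) * ENNReal.ofReal (Real.exp (2 * ε)) * _ +
          ENNReal.ofReal (1 * δ) := by
        gcongr
        exact ENNReal.ofReal_le_ofReal (by linarith)
    _ = _ := by
        rw [← ENNReal.ofReal_mul (Real.exp_pos _).le, ← Real.exp_add]
        ring_nf
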